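/- arXiv:1811.09477 — 5 statements merged into one kernel-verified Lean document; each statement's English description precedes it below -/
import Mathlib

section
/- In the semiprimitive case with γ, p, and (p^j+1)/N all odd, the Gaussian periods of order N over F_q satisfy η_{N/2}^{(N,q)} = √q − (√q+1)/N and η_i^{(N,q)} = −(√q+1)/N for all i ≠ N/2. -/
open scoped Classical

/-- The canonical additive character of a finite field `F` of characteristic `p`. -/
noncomputable def canChar (p : ℕ) (F : Type*) [Field F] [Fintype F] [Algebra (ZMod p) F]
    (x : F) : ℂ :=
  Complex.exp (2 * Real.pi * Complex.I * ((Algebra.trace (ZMod p) F x).val : ℂ) / p)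

/-- Gaussian period `η_i^{(N,q)}` of order `N` w.r.t. primitive element `α`. -/
noncomputable def gaussPeriod (p : ℕ) (F : Type*) [Field F] [Fintype F]
    [Algebra (ZMod p) F] (α : F) (N i : ℕ) : ℂ :=
  ∑ x : F, if ∃ k : ℕ, x = α ^ i * (α ^ N) ^ k then canChar p F x else 0

/-!
Write `r = p^(jγ)`, so that `q = r²` and `r + 1 = N M` with `M` odd. The nonzero elements of
the subfield `F_r = {y | y^r = y}` lie in the class `C₀` (because `N ∣ r + 1`), so multiplying by
them permutes every class `C_i`, and averaging gives
`(r - 1) η_i = ∑_{x ∈ C_i} (∑_{y ∈ F_r} ψ(x y) - 1)`.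

The inner sum is a character sum over the additive group `F_r`, so it is `r` or `0` according as
`ψ(x ·)` is trivial on `F_r` or not. It is trivial when `x^r = -x`, since then
`Tr(x y) = Tr((x y)^r) = -Tr(x y)` for `y ∈ F_r`; and summing over all `x` shows that exactly
`q / r = r` elements `x` make it trivial, which is the number of solutions of `x^r = -x`.

The nonzero solutions of `x^r = -x` satisfy `x^((q-1)/N) = (x^(r-1))^M = (-1)^M = -1`, so they
are `r - 1` elements of `C_{N/2}` and lie in no other class.
-/

open Finset Polynomial

namespace AddChar

variable {G R : Type*} [AddGroup G] [CommRing R] [IsDomain R]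

theorem sum_finset_eq_zero_of_add_mem (ψ : AddChar G R) {S : Finset G}
    (hS : ∀ a ∈ S, ∀ b ∈ S, a + b ∈ S) {a : G} (ha : a ∈ S) (hψa : ψ a ≠ 1) :
    ∑ y ∈ S, ψ y = 0 := by
  have htranslate : S.image (a + ·) = S :=
    eq_of_subset_of_card_le (image_subset_iff.2 fun b hb => hS a ha b hb)
      (card_image_of_injective _ (add_right_injective a)).ge
  refine eq_zero_of_mul_eq_self_left hψa ?_
  calc ψ a * ∑ y ∈ S, ψ y = ∑ y ∈ S, ψ (a + y) := by simp only [mul_sum, map_add_eq_mul]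
    _ = ∑ y ∈ S.image (a + ·), ψ y := (sum_image fun _ _ _ _ h => add_left_cancel h).symm
    _ = ∑ y ∈ S, ψ y := by rw [htranslate]

end AddChar

section CanonicalCharacter

variable (p : ℕ) [Fact p.Prime] (F : Type*) [Field F] [Algebra (ZMod p) F]

noncomputable def canAddChar : AddChar F ℂ :=
  ZMod.stdAddChar.compAddMonoidHom (Algebra.trace (ZMod p) F).toAddMonoidHom

variable {p F}

theorem canAddChar_apply [Fintype F] (x : F) : canAddChar p F x = canChar p F x := by
  rw [canAddChar, AddChar.compAddMonoidHom_apply, ZMod.stdAddChar_apply, ZMod.toCircle_apply,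
    canChar]
  rfl

theorem canAddChar_eq_one_iff {x : F} :
    canAddChar p F x = 1 ↔ Algebra.trace (ZMod p) F x = 0 := by
  rw [← (ZMod.stdAddChar (N := p)).map_zero_eq_one]
  exact ZMod.injective_stdAddChar.eq_iff

variable (p F) [Finite F]

theorem isPrimitive_canAddChar : (canAddChar p F).IsPrimitive := by
  have : CharP F p := charP_of_injective_algebraMap' (ZMod p) p
  obtain rfl := ringChar.eq F p
  obtain ⟨a, ha⟩ := FiniteField.trace_to_zmod_nondegenerate F (one_ne_zero (α := F))
  rw [one_mul, Ne, ← canAddChar_eq_one_iff] at ha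
  exact AddChar.IsPrimitive.of_ne_one (AddChar.ne_one_iff.2 ⟨a, ha⟩)

theorem trace_pow_prime_pow (x : F) (s : ℕ) :
    Algebra.trace (ZMod p) F (x ^ p ^ s) = Algebra.trace (ZMod p) F x := by
  have h := Algebra.trace_eq_of_algEquiv
    (FiniteField.frobeniusAlgEquivOfAlgebraic (ZMod p) F ^ s) x
  rwa [AlgEquiv.coe_pow, FiniteField.coe_frobeniusAlgEquivOfAlgebraic_iterate, ZMod.card] at h

end CanonicalCharacter

theorem IsPrimitiveRoot.pow_div_two_eq_neg_one {R : Type*} [CommRing R] [IsDomain R] {ζ : R}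
    {n : ℕ} (hζ : IsPrimitiveRoot ζ n) (hn : Even n) (hn0 : n ≠ 0) : ζ ^ (n / 2) = -1 :=
  (hζ.pow (Nat.pos_of_ne_zero hn0) (Nat.div_two_mul_two_of_even hn).symm).eq_neg_one_of_two_right

theorem IsPrimitiveRoot.card_nthRootsFinset_of_pow_eq {R : Type*} [CommRing R] [IsDomain R]
    {ζ x a : R} {n : ℕ} (hζ : IsPrimitiveRoot ζ n) (hx : x ^ n = a) (ha : a ≠ 0) :
    #(nthRootsFinset n a) = n := by
  rw [nthRootsFinset_def, Multiset.toFinset_card_of_nodup (hζ.nthRoots_nodup ha),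
    hζ.card_nthRoots, if_pos ⟨x, hx⟩]

theorem card_filter_pow_succ_eq_mul_self {F : Type*} [Field F] [Fintype F] {ζ θ c : F} {n : ℕ}
    (hn : 0 < n) (hζ : IsPrimitiveRoot ζ n) (hθ : θ ^ n = c) (hc : c ≠ 0) :
    #({x | x ^ (n + 1) = c * x} : Finset F) = n + 1 := by
  have hroots : ({x | x ^ (n + 1) = c * x} : Finset F) = insert 0 (nthRootsFinset n c) := by
    ext x
    rw [mem_filter, mem_insert, mem_nthRootsFinset hn, pow_succ]
    by_cases hx : x = 0
    · simp [hx]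
    · simp [hx, mul_left_inj' hx]
  rw [hroots, card_insert_of_notMem, hζ.card_nthRootsFinset_of_pow_eq hθ hc]
  rw [mem_nthRootsFinset hn, zero_pow hn.ne']
  exact hc.symm

section CyclotomicClass

variable {F : Type*} [Field F] [Fintype F]

noncomputable def cyclotomicClass (α : F) (N i : ℕ) : Finset F :=
  {x | ∃ k : ℕ, x = α ^ i * (α ^ N) ^ k}

variable {α : F} {N : ℕ}

theorem mul_mem_cyclotomicClass {i : ℕ} {x y : F} (hx : x ∈ cyclotomicClass α N i)
    (hy : y ∈ cyclotomicClass α N 0) : x * y ∈ cyclotomicClass α N i := by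
  simp only [cyclotomicClass, mem_filter, mem_univ, true_and] at *
  obtain ⟨k, rfl⟩ := hx
  obtain ⟨l, rfl⟩ := hy
  exact ⟨k + l, by ring⟩

theorem pow_mem_cyclotomicClass_mod (k : ℕ) : α ^ k ∈ cyclotomicClass α N (k % N) :=
  mem_filter.2 ⟨mem_univ _, k / N, by rw [← pow_mul, ← pow_add, Nat.mod_add_div]⟩

theorem ne_zero_of_mem_cyclotomicClass (hα : α ≠ 0) {i : ℕ} {x : F}
    (hx : x ∈ cyclotomicClass α N i) : x ≠ 0 := by
  obtain ⟨k, rfl⟩ := (mem_filter.1 hx).2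
  exact mul_ne_zero (pow_ne_zero _ hα) (pow_ne_zero _ (pow_ne_zero _ hα))

theorem pow_eq_of_mem_cyclotomicClass {Q i : ℕ} {x : F} (hαQ : α ^ Q = 1) (hN : N ∣ Q)
    (hx : x ∈ cyclotomicClass α N i) : x ^ (Q / N) = (α ^ (Q / N)) ^ i := by
  obtain ⟨k, rfl⟩ := (mem_filter.1 hx).2
  rw [mul_pow, pow_right_comm (α ^ N) k, ← pow_mul α N, Nat.mul_div_cancel' hN, hαQ, one_pow,
    mul_one, pow_right_comm]

theorem sum_cyclotomicClass_mul {M : Type*} [AddCommMonoid M] (f : F → M) {i : ℕ} {y : F}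
    (hy : y ∈ cyclotomicClass α N 0) (hy0 : y ≠ 0) :
    ∑ x ∈ cyclotomicClass α N i, f (x * y) = ∑ x ∈ cyclotomicClass α N i, f x := by
  have himage : (cyclotomicClass α N i).image (· * y) = cyclotomicClass α N i :=
    eq_of_subset_of_card_le (image_subset_iff.2 fun x hx => mul_mem_cyclotomicClass hx hy)
      (card_image_of_injective _ (mul_left_injective₀ hy0)).ge
  calc ∑ x ∈ cyclotomicClass α N i, f (x * y)
      = ∑ x ∈ (cyclotomicClass α N i).image (· * y), f x :=
        (sum_image fun _ _ _ _ h => mul_right_cancel₀ hy0 h).symm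
    _ = ∑ x ∈ cyclotomicClass α N i, f x := by rw [himage]

theorem card_nsmul_sum_cyclotomicClass {M : Type*} [AddCommMonoid M] (f : F → M) {i : ℕ}
    {S : Finset F} (hS : ∀ y ∈ S, y ∈ cyclotomicClass α N 0 ∧ y ≠ 0) :
    #S • ∑ x ∈ cyclotomicClass α N i, f x =
      ∑ x ∈ cyclotomicClass α N i, ∑ y ∈ S, f (x * y) := by
  rw [sum_comm, ← sum_const]
  exact sum_congr rfl fun y hy => (sum_cyclotomicClass_mul f (hS y hy).1 (hS y hy).2).symm

variable (hα : IsPrimitiveRoot α (Fintype.card F - 1)) (hN : N ∣ Fintype.card F - 1)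
include hα

theorem IsPrimitiveRoot.exists_pow_eq_of_ne_zero {x : F} (hx : x ≠ 0) : ∃ k, α ^ k = x := by
  have : NeZero (Fintype.card F - 1) := ⟨(Nat.sub_pos_of_lt Fintype.one_lt_card).ne'⟩
  obtain ⟨k, -, hk⟩ := hα.eq_pow_of_pow_eq_one (FiniteField.pow_card_sub_one_eq_one x hx)
  exact ⟨k, hk⟩

include hN

theorem card_cyclotomicClass (i : ℕ) :
    #(cyclotomicClass α N i) = (Fintype.card F - 1) / N := by
  have hQ : 0 < Fintype.card F - 1 := Nat.sub_pos_of_lt Fintype.one_lt_card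
  have hβ : IsPrimitiveRoot (α ^ N) ((Fintype.card F - 1) / N) :=
    hα.pow hQ (Nat.mul_div_cancel' hN).symm
  have hclass : cyclotomicClass α N i =
      (range ((Fintype.card F - 1) / N)).image fun k => α ^ i * (α ^ N) ^ k := by
    ext x
    simp only [cyclotomicClass, mem_filter, mem_univ, true_and, mem_image, mem_range]
    constructor
    · rintro ⟨k, rfl⟩
      refine ⟨k % ((Fintype.card F - 1) / N), Nat.mod_lt _ (Nat.div_pos (Nat.le_of_dvd hQ hN)
        (Nat.pos_of_dvd_of_pos hN hQ)), ?_⟩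
      rw [hβ.eq_orderOf, pow_mod_orderOf]
    · rintro ⟨k, -, rfl⟩
      exact ⟨k, rfl⟩
  rw [hclass, card_image_of_injOn, card_range]
  intro a ha b hb hab
  exact hβ.injOn_pow ha hb (mul_left_cancel₀ (pow_ne_zero _ (hα.ne_zero hQ.ne')) hab)

theorem mem_cyclotomicClass_iff {i : ℕ} (hi : i < N) {x : F} (hx : x ≠ 0) :
    x ∈ cyclotomicClass α N i ↔
      x ^ ((Fintype.card F - 1) / N) = (α ^ ((Fintype.card F - 1) / N)) ^ i := by
  refine ⟨pow_eq_of_mem_cyclotomicClass hα.pow_eq_one hN, fun hxi => ?_⟩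
  have hQ : 0 < Fintype.card F - 1 := Nat.sub_pos_of_lt Fintype.one_lt_card
  have hω : IsPrimitiveRoot (α ^ ((Fintype.card F - 1) / N)) N :=
    hα.pow hQ (Nat.div_mul_cancel hN).symm
  obtain ⟨k, rfl⟩ := hα.exists_pow_eq_of_ne_zero hx
  have hk := pow_mem_cyclotomicClass_mod (α := α) (N := N) k
  rwa [hω.pow_inj (Nat.mod_lt k (by omega)) hi
    ((pow_eq_of_mem_cyclotomicClass hα.pow_eq_one hN hk).symm.trans hxi)] at hk

end CyclotomicClass

theorem AddChar.card_filter_forall_mul_eq_one_mul_card {R : Type*} [CommRing R] [Fintype R]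
    {ψ : AddChar R ℂ} (hψ : ψ.IsPrimitive) {K : Finset R}
    (hK : ∀ a ∈ K, ∀ b ∈ K, a + b ∈ K) (h0 : 0 ∈ K) :
    #({x | ∀ y ∈ K, ψ (x * y) = 1} : Finset R) * #K = Fintype.card R := by
  have hsum : ∑ x, ∑ y ∈ K, ψ (x * y) = Fintype.card R := by
    rw [sum_comm]
    simp [AddChar.sum_mulShift _ hψ, h0]
  have hinner (x : R) :
      ∑ y ∈ K, ψ (x * y) = if ∀ y ∈ K, ψ (x * y) = 1 then (#K : ℂ) else 0 := by
    split_ifs with h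
    · rw [sum_congr rfl h, sum_const, nsmul_one]
    · push Not at h
      obtain ⟨y, hy, hψy⟩ := h
      exact (ψ.mulShift x).sum_finset_eq_zero_of_add_mem hK hy hψy
  rw [sum_congr rfl fun x _ => hinner x, ← sum_filter, sum_const, nsmul_eq_mul] at hsum
  exact_mod_cast hsum

section SubfieldSum

variable {p : ℕ} [Fact p.Prime] {F : Type*} [Field F] [Fintype F] [Algebra (ZMod p) F]

theorem trace_mul_eq_zero_of_pow_eq_neg (hp : p ≠ 2) {s : ℕ} {x y : F} (hx : x ^ p ^ s = -x)
    (hy : y ^ p ^ s = y) : Algebra.trace (ZMod p) F (x * y) = 0 := by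
  have h : Algebra.trace (ZMod p) F ((x * y) ^ p ^ s) = -Algebra.trace (ZMod p) F (x * y) := by
    rw [mul_pow, hx, hy, neg_mul, map_neg]
  rw [trace_pow_prime_pow] at h
  refine ((ZMod.neg_eq_self_iff _).1 h.symm).resolve_right fun h2 => ?_
  obtain ⟨k, hk⟩ := (Fact.out : p.Prime).odd_of_ne_two hp
  omega

theorem sum_canAddChar_mul_eq_ite (hp : p ≠ 2) {s : ℕ} (hcard : Fintype.card F = p ^ s * p ^ s)
    (hK : #({y | y ^ p ^ s = y} : Finset F) = p ^ s)
    (hB : #({x | x ^ p ^ s = -x} : Finset F) = p ^ s) (x : F) :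
    ∑ y ∈ ({y | y ^ p ^ s = y} : Finset F), canAddChar p F (x * y) =
      if x ^ p ^ s = -x then ((p ^ s : ℕ) : ℂ) else 0 := by
  have : CharP F p := charP_of_injective_algebraMap' (ZMod p) p
  set K : Finset F := {y | y ^ p ^ s = y}
  have hKadd : ∀ a ∈ K, ∀ b ∈ K, a + b ∈ K := by
    simp only [K, mem_filter, mem_univ, true_and]
    intro a ha b hb
    rw [add_pow_char_pow, ha, hb]
  have h0 : (0 : F) ∈ K := by simp [K, (Fact.out : p.Prime).ne_zero]
  have hA : ({x | ∀ y ∈ K, canAddChar p F (x * y) = 1} : Finset F) =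
      ({x | x ^ p ^ s = -x} : Finset F) := by
    refine (eq_of_subset_of_card_le (fun x hx => ?_) ?_).symm
    · simp only [mem_filter, mem_univ, true_and] at hx ⊢
      exact fun y hy => canAddChar_eq_one_iff.2
        (trace_mul_eq_zero_of_pow_eq_neg hp hx (mem_filter.1 hy).2)
    · have hcount := AddChar.card_filter_forall_mul_eq_one_mul_card
        (isPrimitive_canAddChar p F) hKadd h0
      rw [hK, hcard, Nat.mul_left_inj (pow_pos (Fact.out : p.Prime).pos s).ne'] at hcount
      rw [hcount, hB]
  have hmem := Finset.ext_iff.1 hA x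
  simp only [mem_filter, mem_univ, true_and] at hmem
  split_ifs with hx
  · rw [sum_congr rfl (hmem.2 hx), sum_const, nsmul_one, hK]
  · obtain ⟨y, hy, hψy⟩ := not_forall₂.1 (mt hmem.1 hx)
    exact ((canAddChar p F).mulShift x).sum_finset_eq_zero_of_add_mem hKadd hy hψy

end SubfieldSum

theorem pow_sub_one_eq_of_pow_eq_mul {F : Type*} [Field F] {x c : F} {r : ℕ} (hr : 0 < r)
    (hx : x ≠ 0) (h : x ^ r = c * x) : x ^ (r - 1) = c := by
  rw [← Nat.sub_add_cancel hr, pow_succ] at h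
  exact mul_right_cancel₀ hx h

theorem mul_self_sub_one_eq_mul {r N M : ℕ} (hNM : N * M = r + 1) :
    r * r - 1 = N * ((r - 1) * M) := by
  have h := Nat.mul_self_sub_mul_self_eq r 1
  rw [mul_one] at h
  rw [mul_left_comm, hNM, h, mul_comm]

theorem one_lt_of_card_eq_mul_self {F : Type*} [Field F] [Fintype F] {r : ℕ}
    (hcard : Fintype.card F = r * r) : 1 < r := by
  have := Fintype.one_lt_card (α := F)
  rw [hcard] at this
  by_contra! h
  interval_cases r <;> simp at this

section Semiprimitive

variable {F : Type*} [Field F] [Fintype F] {α : F} {r : ℕ}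
  (hcard : Fintype.card F = r * r) (hα : IsPrimitiveRoot α (Fintype.card F - 1))
include hcard hα

theorem card_filter_pow_eq_mul_self {c θ : F} (hθ : θ ^ (r - 1) = c) (hc : c ≠ 0) :
    #({x | x ^ r = c * x} : Finset F) = r := by
  have hr1 := one_lt_of_card_eq_mul_self hcard
  have hζ : IsPrimitiveRoot (α ^ (r + 1)) (r - 1) :=
    hα.pow (Nat.sub_pos_of_lt Fintype.one_lt_card)
      (by rw [hcard, Nat.mul_self_sub_mul_self_eq r 1])
  simpa only [Nat.sub_add_cancel hr1.le] using
    card_filter_pow_succ_eq_mul_self (by omega) hζ hθ hc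

theorem pow_half_succ_pow_sub_one_eq_neg_one (hr : Odd r) :
    (α ^ ((r + 1) / 2)) ^ (r - 1) = -1 := by
  have hQ : Fintype.card F - 1 = (r + 1) * (r - 1) := by
    rw [hcard, Nat.mul_self_sub_mul_self_eq r 1]
  rw [← pow_mul, Nat.div_mul_right_comm hr.add_one.two_dvd, ← hQ]
  exact hα.pow_div_two_eq_neg_one (hQ ▸ hr.add_one.mul_right _)
    (Nat.sub_pos_of_lt Fintype.one_lt_card).ne'

theorem card_filter_pow_eq_neg_self (hr : Odd r) : #({x | x ^ r = -x} : Finset F) = r := by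
  simpa only [neg_one_mul] using card_filter_pow_eq_mul_self hcard hα
    (pow_half_succ_pow_sub_one_eq_neg_one hcard hα hr) (neg_ne_zero.2 one_ne_zero)

variable {N M : ℕ} (hNM : N * M = r + 1)
include hNM

theorem mem_cyclotomicClass_zero_of_pow_eq_self {y : F} (hy0 : y ≠ 0) (hy : y ^ r = y) :
    y ∈ cyclotomicClass α N 0 := by
  have hN0 : 0 < N := Nat.pos_of_ne_zero (by rintro rfl; omega)
  have hQ : Fintype.card F - 1 = N * ((r - 1) * M) := hcard ▸ mul_self_sub_one_eq_mul hNM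
  rw [mem_cyclotomicClass_iff hα ⟨_, hQ⟩ hN0 hy0, pow_zero, hQ, Nat.mul_div_cancel_left _ hN0,
    pow_mul, pow_sub_one_eq_of_pow_eq_mul (one_lt_of_card_eq_mul_self hcard).le hy0
      (hy.trans (one_mul y).symm), one_pow]

theorem filter_cyclotomicClass_pow_eq_neg (hr : Odd r) (hM : Odd M) {i : ℕ} (hi : i < N) :
    {x ∈ cyclotomicClass α N i | x ^ r = -x} =
      if i = N / 2 then ({x | x ^ r = -x} : Finset F).erase 0 else ∅ := by
  have hN0 : 0 < N := Nat.pos_of_ne_zero (by rintro rfl; omega)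
  have hQ : Fintype.card F - 1 = N * ((r - 1) * M) := hcard ▸ mul_self_sub_one_eq_mul hNM
  have hr1 := one_lt_of_card_eq_mul_self hcard
  have hQpos : 0 < Fintype.card F - 1 := Nat.sub_pos_of_lt Fintype.one_lt_card
  have hNeven : Even N := by
    have hsucc : Even (N * M) := hNM ▸ hr.add_one
    exact (Nat.even_mul.1 hsucc).resolve_right (Nat.not_even_iff_odd.2 hM)
  have hω : IsPrimitiveRoot (α ^ ((Fintype.card F - 1) / N)) N :=
    hα.pow hQpos (Nat.div_mul_cancel ⟨_, hQ⟩).symm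
  have hroot {x : F} (hx0 : x ≠ 0) (hx : x ^ r = -x) :
      x ^ ((Fintype.card F - 1) / N) = (α ^ ((Fintype.card F - 1) / N)) ^ (N / 2) := by
    rw [hω.pow_div_two_eq_neg_one hNeven hN0.ne', hQ, Nat.mul_div_cancel_left _ hN0, pow_mul,
      pow_sub_one_eq_of_pow_eq_mul hr1.le hx0 (hx.trans (neg_one_mul x).symm), hM.neg_one_pow]
  ext x
  by_cases hx0 : x = 0
  · subst hx0
    have h0 : (0 : F) ∉ cyclotomicClass α N i :=
      fun h => ne_zero_of_mem_cyclotomicClass (hα.ne_zero hQpos.ne') h rfl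
    split_ifs <;> simp [h0]
  simp only [mem_filter]
  split_ifs with hi2
  · subst hi2
    simp only [mem_erase, mem_filter, mem_univ, true_and, and_iff_right hx0]
    exact ⟨And.right, fun hx =>
      ⟨(mem_cyclotomicClass_iff hα ⟨_, hQ⟩ hi hx0).2 (hroot hx0 hx), hx⟩⟩
  · simp only [notMem_empty, iff_false, not_and]
    intro hxi hx
    rw [mem_cyclotomicClass_iff hα ⟨_, hQ⟩ hi hx0, hroot hx0 hx] at hxi
    exact hi2 (hω.pow_inj hi (Nat.div_lt_self hN0 one_lt_two) hxi.symm)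

end Semiprimitive

section GaussPeriod

variable {p : ℕ} [Fact p.Prime] {F : Type*} [Field F] [Fintype F] [Algebra (ZMod p) F]

theorem gaussPeriod_eq_sum_cyclotomicClass (α : F) (N i : ℕ) :
    gaussPeriod p F α N i = ∑ x ∈ cyclotomicClass α N i, canAddChar p F x := by
  simp only [gaussPeriod, cyclotomicClass, sum_filter, canAddChar_apply]

variable (hp : p ≠ 2) {s N M : ℕ} (hcard : Fintype.card F = p ^ s * p ^ s)
  (hNM : N * M = p ^ s + 1) {α : F} (hα : IsPrimitiveRoot α (Fintype.card F - 1))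
include hp hcard hNM hα

theorem nsmul_gaussPeriod_eq_sum (i : ℕ) :
    (p ^ s - 1) • gaussPeriod p F α N i =
      ∑ x ∈ cyclotomicClass α N i,
        ((if x ^ p ^ s = -x then ((p ^ s : ℕ) : ℂ) else 0) - 1) := by
  set r := p ^ s
  have hr : Odd r := ((Fact.out : p.Prime).odd_of_ne_two hp).pow
  have hr0 : r ≠ 0 := (one_lt_of_card_eq_mul_self hcard).ne_bot
  have hKcard : #({y | y ^ r = y} : Finset F) = r := by
    simpa only [one_mul] using card_filter_pow_eq_mul_self hcard hα (one_pow _) one_ne_zero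
  set K : Finset F := {y | y ^ r = y}
  have h0 : (0 : F) ∈ K := by simp [K, zero_pow hr0]
  have hS (y : F) (hy : y ∈ K.erase 0) : y ∈ cyclotomicClass α N 0 ∧ y ≠ 0 := by
    obtain ⟨hy0, hy⟩ := mem_erase.1 hy
    exact ⟨mem_cyclotomicClass_zero_of_pow_eq_self hcard hα hNM hy0 (mem_filter.1 hy).2, hy0⟩
  have hK' : #(K.erase 0) = r - 1 := by rw [card_erase_of_mem h0, hKcard]
  rw [gaussPeriod_eq_sum_cyclotomicClass, ← hK', card_nsmul_sum_cyclotomicClass _ hS]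
  refine sum_congr rfl fun x _ => ?_
  rw [sum_erase_eq_sub h0, sum_canAddChar_mul_eq_ite hp hcard hKcard
    (card_filter_pow_eq_neg_self hcard hα hr), mul_zero, AddChar.map_zero_eq_one]

theorem gaussPeriod_eq_of_mul_eq_pow_add_one (hM : Odd M) {i : ℕ} (hi : i < N) :
    gaussPeriod p F α N i = (if i = N / 2 then ((p ^ s : ℕ) : ℂ) else 0) - M := by
  have hr : Odd (p ^ s) := ((Fact.out : p.Prime).odd_of_ne_two hp).pow
  have hr1 := one_lt_of_card_eq_mul_self hcard
  have hN0 : 0 < N := Nat.pos_of_ne_zero (by rintro rfl; omega)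
  have hQ : Fintype.card F - 1 = N * ((p ^ s - 1) * M) := hcard ▸ mul_self_sub_one_eq_mul hNM
  have hsum := nsmul_gaussPeriod_eq_sum hp hcard hNM hα i
  simp only [sum_sub_distrib, ← sum_filter,
    filter_cyclotomicClass_pow_eq_neg hcard hα hNM hr hM hi, sum_const,
    card_cyclotomicClass hα ⟨_, hQ⟩, hQ, Nat.mul_div_cancel_left _ hN0] at hsum
  refine mul_left_cancel₀ (sub_ne_zero.2 (by exact_mod_cast hr1.ne') :
    ((p ^ s : ℕ) : ℂ) - 1 ≠ 0) ?_
  split_ifs at hsum ⊢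
  · rw [card_erase_of_mem (by simp [zero_pow (by omega : p ^ s ≠ 0)]),
      card_filter_pow_eq_neg_self hcard hα hr] at hsum
    simp only [nsmul_eq_mul, Nat.cast_mul, Nat.cast_sub hr1.le, Nat.cast_one] at hsum
    linear_combination hsum
  · simp only [card_empty, nsmul_eq_mul, Nat.cast_mul, Nat.cast_sub hr1.le, Nat.cast_one,
      Nat.cast_zero] at hsum
    linear_combination hsum

end GaussPeriod

theorem exists_odd_mul_eq_pow_add_one {a γ : ℕ} (ha : Odd a) (hγ : Odd γ) :
    ∃ S, Odd S ∧ (a + 1) * S = a ^ γ + 1 := by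
  obtain ⟨b, rfl⟩ := ha
  obtain ⟨m, rfl⟩ := hγ
  obtain ⟨t, ht⟩ := Nat.sub_one_dvd_pow_sub_one (4 * b * (b + 1) + 1) m
  have hpow : (4 * b * (b + 1) + 1) ^ m = 4 * b * (b + 1) * t + 1 := by
    have := Nat.one_le_pow' m (4 * b * (b + 1))
    rw [Nat.add_sub_cancel] at ht
    omega
  -- `a² - 1 = 4b(b+1)` divides `a^(2m) - 1`, so `a^(2m+1) + 1 = (a + 1)(2bat + 1)`.
  refine ⟨2 * (b * (2 * b + 1) * t) + 1, odd_two_mul_add_one _, ?_⟩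
  rw [pow_succ, pow_mul, show (2 * b + 1) ^ 2 = 4 * b * (b + 1) + 1 by ring, hpow]
  ring

theorem ne_zero_of_neg_one_eq_pow {F : Type*} [Field F] (hF : ringChar F ≠ 2) {α : F} {k : ℕ}
    (hk : -1 = α ^ k) : α ≠ 0 := by
  rintro rfl
  rcases k with _ | k
  · exact Ring.neg_one_ne_one_of_char_ne_two hF (by simpa using hk)
  · simp at hk

theorem isPrimitiveRoot_of_forall_eq_pow {F : Type*} [Field F] [Fintype F] {α : F}
    (hα0 : α ≠ 0) (hα : ∀ x : F, x ≠ 0 → ∃ k : ℕ, x = α ^ k) :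
    IsPrimitiveRoot α (Fintype.card F - 1) := by
  have horder : orderOf (Units.mk0 α hα0) = Fintype.card F - 1 := by
    rw [orderOf_eq_card_of_forall_mem_powers, Nat.card_eq_fintype_card, Fintype.card_units]
    intro v
    obtain ⟨k, hk⟩ := hα v v.ne_zero
    exact ⟨k, Units.ext (by simp [hk])⟩
  exact IsPrimitiveRoot.coe_units_iff.2 (IsPrimitiveRoot.iff_orderOf.2 horder)

theorem stmt3_general (p j γ N q : ℕ) (hp : p.Prime)
    (F : Type*) [Field F] [Fintype F] [Algebra (ZMod p) F]
    (hq : q = Fintype.card F) (hqs : q = p ^ (2 * j * γ))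
    (hNdvd : N ∣ p ^ j + 1)
    (α : F) (hα : ∀ x : F, x ≠ 0 → ∃ k : ℕ, x = α ^ k)
    (hoddγ : Odd γ) (hoddp : Odd p) (hoddq : Odd ((p ^ j + 1) / N)) :
    gaussPeriod p F α N (N / 2) =
      (Real.sqrt q : ℂ) - ((Real.sqrt q : ℂ) + 1) / N ∧
    ∀ i : ℕ, i < N → i ≠ N / 2 →
      gaussPeriod p F α N i = -(((Real.sqrt q : ℂ) + 1) / N) := by
  have : Fact p.Prime := ⟨hp⟩
  have : CharP F p := charP_of_injective_algebraMap' (ZMod p) p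
  have hp2 : p ≠ 2 := by rintro rfl; exact Nat.not_odd_iff_even.2 even_two hoddp
  obtain ⟨S, hSodd, hS⟩ := exists_odd_mul_eq_pow_add_one hoddp.pow hoddγ
  have hNM : N * ((p ^ j + 1) / N * S) = p ^ (j * γ) + 1 := by
    rw [← mul_assoc, Nat.mul_div_cancel' hNdvd, hS, pow_mul]
  have hcard : Fintype.card F = p ^ (j * γ) * p ^ (j * γ) := by
    rw [← hq, hqs, ← pow_add, two_mul, add_mul]
  have hsqrt : (Real.sqrt q : ℂ) = ((p ^ (j * γ) : ℕ) : ℂ) := by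
    rw [hqs, mul_assoc, pow_mul', Nat.cast_pow, Real.sqrt_sq (Nat.cast_nonneg _)]
    norm_cast
  have hN0 : (N : ℂ) ≠ 0 :=
    Nat.cast_ne_zero.2 (ne_zero_of_dvd_ne_zero (Nat.succ_ne_zero _) hNdvd)
  have hM : ((Real.sqrt q : ℂ) + 1) / N = (((p ^ j + 1) / N * S : ℕ) : ℂ) := by
    rw [div_eq_iff hN0, hsqrt]
    exact_mod_cast hNM.symm.trans (mul_comm _ _)
  obtain ⟨k, hk⟩ := hα (-1) (neg_ne_zero.2 one_ne_zero)
  have hprim := isPrimitiveRoot_of_forall_eq_pow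
    (ne_zero_of_neg_one_eq_pow (ringChar.eq F p ▸ hp2) hk) hα
  have hperiod (i : ℕ) (hi : i < N) := gaussPeriod_eq_of_mul_eq_pow_add_one hp2 hcard hNM
    hprim (hoddq.mul hSodd) hi
  refine ⟨?_, fun i hi hne => ?_⟩
  · rw [hperiod _ (Nat.div_lt_self (Nat.pos_of_ne_zero (by exact_mod_cast hN0)) one_lt_two),
      if_pos rfl, hM, hsqrt]
  · rw [hperiod i hi, if_neg hne, hM, zero_sub]

/-- The semiprimitive case, part (a): if `γ, p, (p^j+1)/N` are all odd, then
`η_{N/2}^{(N,q)} = √q − (√q+1)/N` and `η_i^{(N,q)} = −(√q+1)/N` for `i ≠ N/2`. -/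
theorem stmt3 (p j γ N q : ℕ) (hp : p.Prime) (hN : 2 ≤ N)
    (hj : 0 < j) (hγ : 0 < γ)
    (F : Type*) [Field F] [Fintype F] [Algebra (ZMod p) F]
    (hq : q = Fintype.card F) (hqs : q = p ^ (2 * j * γ))
    (hNdvd : N ∣ p ^ j + 1)
    (hjmin : ∀ j' : ℕ, 0 < j' → N ∣ p ^ j' + 1 → j ≤ j')
    (α : F) (hα : ∀ x : F, x ≠ 0 → ∃ k : ℕ, x = α ^ k)
    (hoddγ : Odd γ) (hoddp : Odd p) (hoddq : Odd ((p ^ j + 1) / N)) :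
    gaussPeriod p F α N (N / 2) =
      (Real.sqrt q : ℂ) - ((Real.sqrt q : ℂ) + 1) / N ∧
    ∀ i : ℕ, i < N → i ≠ N / 2 →
      gaussPeriod p F α N i = -(((Real.sqrt q : ℂ) + 1) / N) :=
  stmt3_general p j γ N q hp F hq hqs hNdvd α hα hoddγ hoddp hoddq
end

section
/- For a ∈ F_{q^{m_1}}^* and any b ∈ F_{q^m}, the codeword c(a,b) of the code C_K has Hamming weight exactly 2nq^{m_1−1}(q−1). -/
/-!
For fixed `y ∈ D` and a fixed half of the codeword, the coordinates of `c(a,b)` are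
`x ↦ Tr(a x) + const` as `x` runs over `F_{q^{m_1}}`. For `a ≠ 0` the map `x ↦ Tr(a x)` is a
surjective `F_q`-linear form, so each of its fibres has `q^{m_1-1}` elements and exactly
`q^{m_1} - q^{m_1-1}` coordinates of such a column are nonzero, whatever the constant.
There are `2n` columns.
-/

open scoped Classical

/-- The codeword `c(a,b)` of the code `C_K` with `K = F_{q^{m_1}} × D`,
`D = {ω^{hi} : 0 ≤ i < n}`:
`c(a,b) = (Tr^{m_1}_1(ax)+Tr^m_1(by) | Tr^{m_1}_1(ax)+Tr^m_1((a+b)y))_{(x,y) ∈ K}`,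
indexed by `(x, i, half) ∈ E1 × Fin n × Bool` where `y = ω^{hi}`. -/
noncomputable def cword (Kq E1 E : Type*) [Field Kq] [Field E1] [Field E]
    [Algebra Kq E1] [Algebra Kq E] [Algebra E1 E]
    (ω : E) (h n : ℕ) (a : E1) (b : E) : E1 × Fin n × Bool → Kq :=
  fun z =>
    if z.2.2 then
      Algebra.trace Kq E1 (a * z.1) + Algebra.trace Kq E (b * ω ^ (h * (z.2.1 : ℕ)))
    else
      Algebra.trace Kq E1 (a * z.1) +
        Algebra.trace Kq E ((algebraMap E1 E a + b) * ω ^ (h * (z.2.1 : ℕ)))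

open Finset

lemma AddMonoidHom.card_fiber_mul_card_eq {G M : Type*} [AddGroup G] [Fintype G] [AddMonoid M]
    [Fintype M] [DecidableEq M] {f : G →+ M} (hf : Function.Surjective f) (y : M) :
    #{g | f g = y} * Fintype.card M = Fintype.card G := by
  have hsum : Fintype.card G = ∑ z : M, #{g | f g = z} := by
    rw [← card_univ]
    exact card_eq_sum_card_fiberwise fun _ _ ↦ mem_univ _
  rw [hsum, sum_congr rfl fun z _ ↦ card_fiber_eq_of_mem_range f (hf z) (hf y), sum_const,
    card_univ, smul_eq_mul, mul_comm]

lemma hammingNorm_eq_sum_hammingNorm_column {α β γ : Type*} [Fintype α] [Fintype β] [Zero γ]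
    [DecidableEq γ] (x : α × β → γ) :
    hammingNorm x = ∑ b, hammingNorm fun a ↦ x (a, b) := by
  simp only [hammingNorm, card_filter]
  rw [Fintype.sum_prod_type, sum_comm]

section TraceForm

variable (K : Type*) {L : Type*} [Field K] [Fintype K] [Field L] [Fintype L] [Algebra K L]

lemma Algebra.trace_mul_left_surjective {a : L} (ha : a ≠ 0) :
    Function.Surjective fun x ↦ Algebra.trace K L (a * x) :=
  (Algebra.trace_surjective K L).comp (mulLeft_bijective₀ a ha).surjective

variable [DecidableEq K]

lemma card_filter_trace_mul_eq {a : L} (ha : a ≠ 0) (y : K) :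
    #{x | Algebra.trace K L (a * x) = y} = Fintype.card K ^ (Module.finrank K L - 1) := by
  have hfib := AddMonoidHom.card_fiber_mul_card_eq
    (f := ((Algebra.trace K L).comp (LinearMap.mulLeft K a)).toAddMonoidHom)
    (Algebra.trace_mul_left_surjective K ha) y
  rw [Module.card_eq_pow_finrank (K := K) (V := L), ← pow_sub_one_mul Module.finrank_pos.ne']
    at hfib
  exact Nat.eq_of_mul_eq_mul_right Fintype.card_pos hfib

lemma hammingNorm_trace_mul_add {a : L} (ha : a ≠ 0) (c : K) :
    hammingNorm (fun x ↦ Algebra.trace K L (a * x) + c) =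
      Fintype.card K ^ (Module.finrank K L - 1) * (Fintype.card K - 1) := by
  have hcompl : #{x | Algebra.trace K L (a * x) + c ≠ 0} =
      Fintype.card L - #{x | Algebra.trace K L (a * x) = -c} := by
    rw [← card_compl]
    congr 1
    ext x
    simp only [mem_compl, mem_filter_univ, ne_eq, add_eq_zero_iff_eq_neg]
  rw [hammingNorm, hcompl, card_filter_trace_mul_eq K ha,
    Module.card_eq_pow_finrank (K := K) (V := L), ← pow_sub_one_mul Module.finrank_pos.ne',
    Nat.mul_sub_one]

end TraceForm

theorem stmt7_general (q m1 h n : ℕ) (Kq E1 E : Type*)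
    [Field Kq] [Fintype Kq] [DecidableEq Kq]
    [Field E1] [Fintype E1] [Field E]
    [Algebra Kq E1] [Algebra Kq E] [Algebra E1 E]
    (hq : q = Fintype.card Kq)
    (hc1 : Fintype.card E1 = q ^ m1)
    (ω : E) :
    ∀ a : E1, a ≠ 0 → ∀ b : E,
      hammingNorm (cword Kq E1 E ω h n a b) = 2 * n * q ^ (m1 - 1) * (q - 1) := by
  intro a ha b
  have hrank : Module.finrank Kq E1 = m1 := by
    rw [Module.card_eq_pow_finrank (K := Kq), ← hq] at hc1
    exact Nat.pow_right_injective (hq ▸ Fintype.one_lt_card) hc1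
  have hcol (w : Fin n × Bool) :
      hammingNorm (fun x ↦ cword Kq E1 E ω h n a b (x, w)) = q ^ (m1 - 1) * (q - 1) := by
    subst hq hrank
    obtain ⟨i, _ | _⟩ := w <;> simp only [cword, if_true, Bool.false_eq_true, if_false] <;>
      exact hammingNorm_trace_mul_add Kq ha _
  rw [hammingNorm_eq_sum_hammingNorm_column, sum_congr rfl fun w _ ↦ hcol w, sum_const, card_univ,
    Fintype.card_prod, Fintype.card_fin, Fintype.card_bool, smul_eq_mul]
  ring

/-- For `a ∈ F_{q^{m_1}}^*` and any `b ∈ F_{q^m}`, the codeword `c(a,b)` has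
Hamming weight exactly `2nq^{m_1−1}(q−1)`. -/
theorem stmt7 (q m m1 h n : ℕ) (Kq E1 E : Type*)
    [Field Kq] [Fintype Kq] [DecidableEq Kq]
    [Field E1] [Fintype E1] [Field E] [Fintype E]
    [Algebra Kq E1] [Algebra Kq E] [Algebra E1 E] [IsScalarTower Kq E1 E]
    (hq : q = Fintype.card Kq) (hqodd : Odd q)
    (hm1 : m1 ∣ m) (hc1 : Fintype.card E1 = q ^ m1) (hc : Fintype.card E = q ^ m)
    (ω : E) (hω : ∀ x : E, x ≠ 0 → ∃ k : ℕ, x = ω ^ k)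
    (hh0 : 0 < h) (hh : h ∣ (q ^ m - 1) / (q - 1))
    (hn0 : 0 < n) (hn : (q ^ m - 1) / (h * (q - 1)) ∣ n)
    (hnh : n * (q - 1) * h ≤ q ^ m - 1) :
    ∀ a : E1, a ≠ 0 → ∀ b : E,
      hammingNorm (cword Kq E1 E ω h n a b) = 2 * n * q ^ (m1 - 1) * (q - 1) :=
  stmt7_general q m1 h n Kq E1 E hq hc1 ω
end

section
/- If n = t(q^m−1)/(q−1) with 0 < t < q/2, then the quantities n' = 2nq^{m_1}, k = m+m_1, d = 2nq^{m_1−1}(q−1) satisfy the Griesmer bound with equality: Σ_{i=0}^{k−1} ⌈d/q^i⌉ = n'. -/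
/-!
Put `d = 2n(q-1)q^(m1-1) = 2t(q^m-1)q^(m1-1)`. For `i < m1` the quotient `d/q^i` is the integer
`2n(q-1)q^(m1-1-i)`, and these sum to `2n(q^m1 - 1)`. For `i = m1 + k` with `k < m` we get
`d/q^i = 2tq^(m-1-k) - 2t/q^(k+1)` with `0 < 2t/q^(k+1) < 1` because `2t < q`, so the ceiling is
`2tq^(m-1-k)`; these sum to `2t(q^m-1)/(q-1) = 2n`. Altogether `2n(q^m1 - 1) + 2n = 2nq^m1`.
-/

open Finset

section

variable {K : Type*} [Field K] [LinearOrder K] [IsStrictOrderedRing K] [FloorRing K]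

theorem Int.ceil_natCast_mul_pow_div_pow {a q e i : ℕ} (hq : q ≠ 0) (hi : i ≤ e) :
    ⌈((a * q ^ e : ℕ) : K) / (q : K) ^ i⌉ = ((a * q ^ (e - i) : ℕ) : ℤ) := by
  obtain ⟨j, rfl⟩ := Nat.exists_eq_add_of_le hi
  rw [Nat.add_sub_cancel_left, pow_add, mul_left_comm, Nat.cast_mul, Nat.cast_pow,
    mul_div_cancel_left₀ _ (pow_ne_zero _ (Nat.cast_ne_zero.2 hq)), Int.ceil_natCast]

theorem Int.ceil_natCast_mul_pow_sub_one_mul_pow_div_pow {c q m e j : ℕ} (hq : 0 < q)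
    (hj : j ≤ m) (hc : c < q ^ j) :
    ⌈((c * (q ^ m - 1) * q ^ e : ℕ) : K) / (q : K) ^ (e + j)⌉ = ((c * q ^ (m - j) : ℕ) : ℤ) := by
  obtain ⟨l, rfl⟩ := Nat.exists_eq_add_of_le hj
  have hqj : (0 : K) < (q : K) ^ j := by positivity
  have hcq : (c : K) < (q : K) ^ j := by exact_mod_cast hc
  have hvalue : ((c * (q ^ (j + l) - 1) * q ^ e : ℕ) : K) / (q : K) ^ (e + j) =
      (c * q ^ l : ℕ) - (c : K) / (q : K) ^ j := by
    rw [Nat.cast_mul, Nat.cast_mul, Nat.cast_sub (Nat.one_le_pow _ _ hq)]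
    field_simp
    push_cast
    ring
  rw [Nat.add_sub_cancel_left, hvalue, Int.ceil_eq_iff, Int.cast_natCast]
  constructor
  · linarith [(div_lt_one hqj).2 hcq]
  · linarith [div_nonneg (Nat.cast_nonneg c) hqj.le]

end

theorem Nat.sum_range_mul_sub_one_mul_pow_add_sum_range_mul_pow {q m m1 N T : ℕ} (hq : 1 < q)
    (hN : N * (q - 1) = T * (q ^ m - 1)) :
    ∑ i ∈ range m1, N * (q - 1) * q ^ (m1 - 1 - i) + ∑ k ∈ range m, T * q ^ (m - 1 - k) =
      N * q ^ m1 := by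
  obtain ⟨r, rfl⟩ : ∃ r, q = r + 1 := ⟨q - 1, by omega⟩
  have hr : 0 < r := by omega
  rw [Nat.add_sub_cancel] at hN ⊢
  rw [sum_range_reflect (fun i => N * r * (r + 1) ^ i) m1,
    sum_range_reflect (fun k => T * (r + 1) ^ k) m, ← mul_sum, ← mul_sum,
    ← geom_sum_mul_add r m1]
  have htail : T * ∑ k ∈ range m, (r + 1) ^ k = N := by
    rw [← geom_sum_mul_add r m, Nat.add_sub_cancel, ← mul_assoc] at hN
    exact (Nat.eq_of_mul_eq_mul_right hr hN).symm
  rw [htail]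
  ring

theorem stmt11_general (q m m1 n t : ℕ) (hm1 : 0 < m1) (ht : 0 < t) (ht2 : 2 * t < q)
    (hn : n * (q - 1) = t * (q ^ m - 1)) :
    ∑ i ∈ Finset.range (m + m1),
        ⌈((2 * n * q ^ (m1 - 1) * (q - 1) : ℕ) : ℚ) / (q : ℚ) ^ i⌉ =
      ((2 * n * q ^ m1 : ℕ) : ℤ) := by
  have hq : 0 < q := by omega
  have hd_head : 2 * n * q ^ (m1 - 1) * (q - 1) = 2 * n * (q - 1) * q ^ (m1 - 1) := by ring
  have hd_tail : 2 * n * q ^ (m1 - 1) * (q - 1) = 2 * t * (q ^ m - 1) * q ^ (m1 - 1) := by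
    rw [hd_head, mul_assoc 2, hn, ← mul_assoc]
  have h2n : 2 * n * (q - 1) = 2 * t * (q ^ m - 1) := by rw [mul_assoc, hn, mul_assoc]
  rw [add_comm m, sum_range_add,
    ← Nat.sum_range_mul_sub_one_mul_pow_add_sum_range_mul_pow (m := m) (m1 := m1) (by omega) h2n,
    Nat.cast_add, Nat.cast_sum, Nat.cast_sum]
  congr 1
  · refine sum_congr rfl fun i hi => ?_
    rw [hd_head]
    exact Int.ceil_natCast_mul_pow_div_pow hq.ne' (by rw [mem_range] at hi; omega)
  · refine sum_congr rfl fun k hk => ?_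
    rw [mem_range] at hk
    rw [hd_tail, show m1 + k = m1 - 1 + (k + 1) by omega, show m - 1 - k = m - (k + 1) by omega]
    exact Int.ceil_natCast_mul_pow_sub_one_mul_pow_div_pow hq (by omega)
      (ht2.trans_le (Nat.le_self_pow k.succ_ne_zero q))

/-- The Griesmer-bound computation: if `n = t(q^m−1)/(q−1)` with `0 < t < q/2`,
then `n' = 2nq^{m_1}`, `k = m + m_1`, `d = 2nq^{m_1−1}(q−1)` satisfy
`∑_{i=0}^{k−1} ⌈d/q^i⌉ = n'`. -/
theorem stmt11 (p s q m m1 n t : ℕ) (hp : p.Prime) (hqp : q = p ^ s) (hs : 0 < s)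
    (hm : 0 < m) (hm1 : 0 < m1) (ht : 0 < t) (ht2 : 2 * t < q)
    (hn : n * (q - 1) = t * (q ^ m - 1)) :
    ∑ i ∈ Finset.range (m + m1),
        ⌈((2 * n * q ^ (m1 - 1) * (q - 1) : ℕ) : ℚ) / (q : ℚ) ^ i⌉ =
      ((2 * n * q ^ m1 : ℕ) : ℤ) :=
  stmt11_general q m m1 n t hm1 ht ht2 hn
end

section
/- Let C be a q-ary linear code with minimum nonzero weight w_min and maximum weight w_max. If w_min/w_max > (q−1)/q, then C is minimal, i.e., every nonzero codeword c covers only the codewords a·c with a ∈ F_q. -/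
open scoped Classical

/-- Ashikhmin–Barg: if the minimum nonzero weight `w_min` and maximum weight `w_max`
of a `q`-ary linear code `C` satisfy `w_min/w_max > (q−1)/q`, then `C` is minimal:
every nonzero codeword `c` covers only the codewords `a • c`, `a ∈ F_q`. -/
theorem stmt15 (Kq : Type*) [Field Kq] [Fintype Kq] [DecidableEq Kq]
    (ι : Type*) [Fintype ι] (C : Submodule Kq (ι → Kq)) (wmin wmax : ℕ)
    (hmin : ∀ c ∈ C, c ≠ 0 → wmin ≤ hammingNorm c)
    (hmax : ∀ c ∈ C, hammingNorm c ≤ wmax)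
    (hratio : ((Fintype.card Kq : ℚ) - 1) / (Fintype.card Kq : ℚ) <
      (wmin : ℚ) / (wmax : ℚ)) :
    ∀ c ∈ C, c ≠ 0 → ∀ c' ∈ C, (∀ i : ι, c' i ≠ 0 → c i ≠ 0) →
      ∃ a : Kq, c' = a • c := by
  intro c hc hc0 c' hc' hsupp
  by_contra hno
  push_neg at hno
  set q := Fintype.card Kq with hq
  have hq1 : 1 ≤ q := Fintype.card_pos
  set S : Finset ι := Finset.univ.filter (fun i => c i ≠ 0) with hS
  have hScard : S.card = hammingNorm c := rfl
  have hSpos : 0 < S.card := by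
    rw [hScard]
    exact (hammingNorm_pos_iff).mpr hc0
  set V : Kq → Finset ι := fun a => S.filter (fun i => c' i * (c i)⁻¹ = a) with hV
  -- partition
  have hpart : S.card = ∑ a : Kq, (V a).card := by
    exact Finset.card_eq_sum_card_fiberwise (fun x _ => Finset.mem_univ _)
  -- weight of c' - a • c
  have hwt : ∀ a : Kq, hammingNorm (c' - a • c) + (V a).card = S.card := by
    intro a
    have hsup : Finset.univ.filter (fun i => (c' - a • c) i ≠ 0) = S \ V a := by
      ext i
      by_cases hci : c i = 0
      · have hc'i : c' i = 0 := by
          by_contra h'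
          exact (hsupp i h') hci
        simp only [Finset.mem_filter, Finset.mem_sdiff, Finset.mem_univ, true_and,
          Pi.sub_apply, Pi.smul_apply, smul_eq_mul, hci, hc'i, mul_zero, sub_zero,
          ne_eq, not_true_eq_false, hS, hV]
        simp [hci]
      · have hiS : i ∈ S := Finset.mem_filter.mpr ⟨Finset.mem_univ _, hci⟩
        simp only [Finset.mem_filter, Finset.mem_sdiff, Finset.mem_univ, true_and,
          Pi.sub_apply, Pi.smul_apply, smul_eq_mul, hV, ne_eq, hiS, sub_eq_zero]
        constructor
        · intro h heq
          apply h; rw [← heq]; field_simp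
        · intro h heq
          apply h; rw [heq]; field_simp
    have hsub : V a ⊆ S := Finset.filter_subset _ _
    have : hammingNorm (c' - a • c) = (S \ V a).card := by
      rw [hammingNorm, hsup]
    rw [this, Finset.card_sdiff_of_subset hsub, Nat.sub_add_cancel (Finset.card_le_card hsub)]
  -- each c' - a • c is nonzero and in C
  have hmem : ∀ a : Kq, c' - a • c ∈ C := fun a => C.sub_mem hc' (C.smul_mem a hc)
  have hne : ∀ a : Kq, c' - a • c ≠ 0 := by
    intro a h
    exact hno a (by rw [sub_eq_zero] at h; exact h)
  have hlow : ∀ a : Kq, wmin ≤ hammingNorm (c' - a • c) := fun a =>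
    hmin _ (hmem a) (hne a)
  -- sum
  have hsum : ∑ a : Kq, hammingNorm (c' - a • c) + S.card = q * S.card := by
    have := Finset.sum_congr rfl (fun a (_ : a ∈ (Finset.univ : Finset Kq)) => (hwt a))
    rw [Finset.sum_add_distrib] at this
    rw [← hpart] at this
    rw [this, Finset.sum_const, Finset.card_univ, smul_eq_mul]
  have hqwmin : q * wmin + S.card ≤ q * S.card := by
    rw [← hsum]
    have : q * wmin ≤ ∑ a : Kq, hammingNorm (c' - a • c) := by
      calc q * wmin = ∑ _a : Kq, wmin := by
            rw [Finset.sum_const, Finset.card_univ, smul_eq_mul]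
          _ ≤ _ := Finset.sum_le_sum (fun a _ => hlow a)
    omega
  have hkey : q * wmin ≤ (q - 1) * S.card := by
    have hsm : (q - 1) * S.card = q * S.card - S.card := by
      rw [Nat.sub_mul, one_mul]
    omega
  have hSw : S.card ≤ wmax := by rw [hScard]; exact hmax c hc
  have hkey2 : q * wmin ≤ (q - 1) * wmax :=
    hkey.trans (Nat.mul_le_mul_left _ hSw)
  -- contradiction with hratio
  have hwmaxpos : 0 < wmax := lt_of_lt_of_le hSpos hSw
  have hqpos : (0 : ℚ) < q := by exact_mod_cast hq1
  have hwpos : (0 : ℚ) < wmax := by exact_mod_cast hwmaxpos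
  rw [div_lt_div_iff₀ hqpos hwpos] at hratio
  -- hratio : (q - 1) * wmax < wmin * q
  have hcast : (q : ℚ) * wmin ≤ ((q : ℚ) - 1) * wmax := by
    have h1 : ((q - 1 : ℕ) : ℚ) = (q : ℚ) - 1 := by
      have : (1 : ℕ) ≤ q := hq1
      push_cast [Nat.cast_sub this]
      ring
    calc (q : ℚ) * wmin = ((q * wmin : ℕ) : ℚ) := by push_cast; ring
      _ ≤ (((q - 1) * wmax : ℕ) : ℚ) := by exact_mod_cast hkey2
      _ = ((q : ℚ) - 1) * wmax := by rw [Nat.cast_mul, h1]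
  nlinarith [hratio, hcast]
end

section
/- If m > 1 and h = 1, then the two-weight code C_K is a minimal linear code: its two nonzero weights w_1 = 2nq^{m_1−1}(q−1) and w_2 = 2nq^{m_1+m−1}(q−1)/(q^m−1) satisfy w_min/w_max > (q−1)/q. -/
/-! The nonzero codewords of `C_K` have exactly two weights. If `a ≠ 0`, every slice
`x ↦ Tr(ax) + const` of `c(a,b)` is a nonconstant affine form on `F_{q^{m_1}}`, nonzero at
`q^{m_1-1}(q-1)` points. If `a = 0`, only `Tr(bω^i)` matters: `ω^N`, `N = (q^m-1)/(q-1)`, is the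
norm of `ω`, a nonzero element of `F_q`, so `i ↦ [Tr(bω^i) ≠ 0]` is `N`-periodic, and `q-1`
periods run once through `F_{q^m}^*`.

Minimality is the Ashikhmin–Barg argument: if `supp c' ⊆ supp c` and no `c' - tc` vanishes, then
summing the weights of `c' - tc` over `t ∈ F_q` gives `q w_min ≤ (q-1) wt(c) ≤ (q-1) w_max`. -/

open scoped Classical

open Finset

section MinimalCode

variable {K ι : Type*} [Field K] [Fintype K] [Fintype ι]

def IsMinimalCode (C : Submodule K (ι → K)) : Prop :=
  ∀ c ∈ C, c ≠ 0 → ∀ c' ∈ C, (∀ i, c' i ≠ 0 → c i ≠ 0) → ∃ s : K, c' = s • c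

variable [DecidableEq K]

lemma card_filter_sub_mul_ne_zero (x : K) {y : K} (hy : y ≠ 0) :
    #{t | x - t * y ≠ 0} = Fintype.card K - 1 := by
  have : ({t | x - t * y ≠ 0} : Finset K) = univ.erase (x / y) := by
    ext t
    simp [sub_eq_zero, eq_div_iff hy, eq_comm]
  rw [this, card_erase_of_mem (mem_univ _), card_univ]

lemma sum_hammingNorm_sub_smul {c c' : ι → K} (hsupp : ∀ i, c' i ≠ 0 → c i ≠ 0) :
    ∑ t : K, hammingNorm (c' - t • c) = (Fintype.card K - 1) * hammingNorm c := by
  have hcoord : ∀ i, #{t | c' i - t * c i ≠ 0} = if c i ≠ 0 then Fintype.card K - 1 else 0 := by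
    intro i
    split_ifs with hci
    · exact card_filter_sub_mul_ne_zero _ hci
    · have hc'i : c' i = 0 := by_contra fun h => hci (hsupp i h)
      simp [not_not.mp hci, hc'i]
  simp only [hammingNorm, Pi.sub_apply, Pi.smul_apply, smul_eq_mul, card_filter]
  rw [sum_comm, mul_sum]
  refine sum_congr rfl fun i _ => ?_
  rw [← card_filter, hcoord, mul_ite, mul_one, mul_zero]

theorem isMinimalCode_of_weight_ratio (C : Submodule K (ι → K)) (wmin wmax : ℚ)
    (hw : ∀ c ∈ C, c ≠ 0 → (hammingNorm c : ℚ) ∈ Set.Icc wmin wmax)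
    (hratio : ((Fintype.card K : ℚ) - 1) / Fintype.card K < wmin / wmax) :
    IsMinimalCode C := by
  intro c hc hc0 c' hc' hsupp
  by_contra! hne
  have hq : (1 : ℚ) < Fintype.card K := by exact_mod_cast Fintype.one_lt_card
  have hwmax : 0 < wmax :=
    lt_of_lt_of_le (by exact_mod_cast hammingNorm_pos_iff.mpr hc0) (hw c hc hc0).2
  have hlow : ∀ t : K, wmin ≤ hammingNorm (c' - t • c) := fun t =>
    (hw _ (C.sub_mem hc' (C.smul_mem t hc)) (sub_ne_zero.mpr (hne t))).1
  have hsum : (Fintype.card K : ℚ) * wmin ≤ (Fintype.card K - 1) * wmax :=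
    calc (Fintype.card K : ℚ) * wmin
        ≤ ∑ t : K, (hammingNorm (c' - t • c) : ℚ) := by
          simpa using card_nsmul_le_sum univ _ _ fun t _ => hlow t
      _ = (Fintype.card K - 1) * hammingNorm c := by
          rw [← Nat.cast_sum, sum_hammingNorm_sub_smul hsupp,
            Nat.cast_mul, Nat.cast_sub Fintype.card_pos, Nat.cast_one]
      _ ≤ (Fintype.card K - 1) * wmax := mul_le_mul_of_nonneg_left (hw c hc hc0).2 (by linarith)
  rw [div_lt_div_iff₀ (by linarith) hwmax] at hratio
  linarith

end MinimalCode

section TraceFibers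

variable (K : Type*) {L : Type*} [Field K] [Fintype K] [DecidableEq K] [Field L] [Fintype L]
  [Algebra K L]

lemma card_filter_trace_mul_eq_mul_card {a : L} (ha : a ≠ 0) (c : K) :
    #{x | Algebra.trace K L (a * x) = c} * Fintype.card K = Fintype.card L := by
  let f : L →ₗ[K] K := (Algebra.trace K L).comp (LinearMap.mulLeft K a)
  have hf : Function.Surjective f := fun d => by
    obtain ⟨y, hy⟩ := Algebra.trace_surjective K L d
    exact ⟨a⁻¹ * y, by simp [f, ← mul_assoc, mul_inv_cancel₀ ha, hy]⟩
  have hfiber : ∀ d : K, #{x | f x = d} = #{x | f x = c} := fun d =>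
    AddMonoidHom.card_fiber_eq_of_mem_range f.toAddMonoidHom (hf d) (hf c)
  calc #{x | Algebra.trace K L (a * x) = c} * Fintype.card K
      = ∑ d : K, #{x | f x = d} := by
        rw [sum_congr rfl fun d _ => hfiber d, sum_const, card_univ, smul_eq_mul, mul_comm]; rfl
    _ = Fintype.card L := (card_eq_sum_card_fiberwise fun x _ => mem_univ (f x)).symm

lemma card_filter_trace_mul_add_ne_zero_mul_card {a : L} (ha : a ≠ 0) (c : K) :
    #{x | Algebra.trace K L (a * x) + c ≠ 0} * Fintype.card K
      = Fintype.card L * (Fintype.card K - 1) := by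
  have hsplit := card_filter_add_card_filter_not (s := univ)
    fun x : L => Algebra.trace K L (a * x) = -c
  have hzero := card_filter_trace_mul_eq_mul_card K ha (-c)
  simp only [← add_eq_zero_iff_eq_neg, card_univ] at hsplit hzero
  have htotal := congrArg (· * Fintype.card K) hsplit
  simp only [add_mul] at htotal
  simp only [ne_eq, Nat.mul_sub_one]
  omega

end TraceFibers

lemma Nat.count_mul_of_periodic {p : ℕ → Prop} [DecidablePred p] {N : ℕ}
    (hp : Function.Periodic p N) (k : ℕ) : Nat.count p (k * N) = k * Nat.count p N := by
  induction k with
  | zero => simp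
  | succ k ih =>
    have hshift : (fun i => p (k * N + i)) = p := funext fun i => by
      rw [add_comm]; exact_mod_cast hp.nat_mul k i
    rw [Nat.succ_mul, Nat.count_add, ih]
    simp only [hshift, Nat.succ_mul]

section Generator

variable {L : Type*} [Field L] [Fintype L]

lemma isPrimitiveRoot_of_forall_eq_pow_s16 {ω : L} (hω : ∀ x : L, x ≠ 0 → ∃ k : ℕ, x = ω ^ k)
    (hL : 2 < Fintype.card L) : IsPrimitiveRoot ω (Fintype.card L - 1) := by
  have hω0 : ω ≠ 0 := by
    rintro rfl
    have hsub : (univ : Finset L) ⊆ {0, 1} := fun x _ => by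
      by_cases hx : x = 0
      · simp [hx]
      · obtain ⟨k, rfl⟩ := hω x hx
        rcases eq_or_ne k 0 with rfl | hk <;> simp_all
    have := card_le_card hsub
    rw [card_univ] at this
    exact absurd (this.trans card_le_two) (by omega)
  have hgen : ∀ x : Lˣ, x ∈ Subgroup.zpowers (Units.mk0 ω hω0) := fun x => by
    obtain ⟨k, hk⟩ := hω x x.ne_zero
    exact ⟨k, Units.ext (by simp [hk])⟩
  have := IsPrimitiveRoot.orderOf (Units.mk0 ω hω0)
  rw [orderOf_eq_card_of_forall_mem_zpowers hgen, Nat.card_eq_fintype_card,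
    Fintype.card_units] at this
  exact IsPrimitiveRoot.coe_units_iff.mpr this

lemma IsPrimitiveRoot.count_pow_eq_card {ζ : L} (hζ : IsPrimitiveRoot ζ (Fintype.card L - 1))
    (P : L → Prop) [DecidablePred P] (hP : ¬ P 0) :
    Nat.count (fun i => P (ζ ^ i)) (Fintype.card L - 1) = #{x | P x} := by
  have : NeZero (Fintype.card L - 1) := ⟨by have := Fintype.one_lt_card (α := L); omega⟩
  rw [Nat.count_eq_card_filter_range]
  refine card_bij (fun i _ => ζ ^ i) (fun i hi => by simpa using (mem_filter.mp hi).2)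
    (fun i hi j hj hij => hζ.pow_inj (by simp_all) (by simp_all) hij) fun x hx => ?_
  have hx0 : x ≠ 0 := fun h => hP (h ▸ (mem_filter.mp hx).2)
  obtain ⟨i, hi, rfl⟩ := hζ.eq_pow_of_pow_eq_one (FiniteField.pow_card_sub_one_eq_one x hx0)
  exact ⟨i, by simpa [hi] using (mem_filter.mp hx).2, rfl⟩

end Generator

lemma count_trace_mul_pow_ne_zero (K : Type*) {L : Type*} [Field K] [Fintype K] [DecidableEq K]
    [Field L] [Fintype L] [Algebra K L] {ζ : L} (hζ : IsPrimitiveRoot ζ (Fintype.card L - 1))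
    {b : L} (hb : b ≠ 0) {n : ℕ} (hn : (Fintype.card L - 1) / (Fintype.card K - 1) ∣ n) :
    Nat.count (fun i => Algebra.trace K L (b * ζ ^ i) ≠ 0) n * Fintype.card K
        * (Fintype.card L - 1) = n * (Fintype.card K - 1) * Fintype.card L := by
  set N := (Fintype.card L - 1) / (Fintype.card K - 1)
  have hq : 1 < Fintype.card K := Fintype.one_lt_card
  have hN : (Fintype.card K - 1) * N = Fintype.card L - 1 := by
    refine Nat.mul_div_cancel' ?_
    simpa [Module.card_eq_pow_finrank (K := K) (V := L)] using
      Nat.sub_dvd_pow_sub_pow (Fintype.card K) 1 (Module.finrank K L)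
  have hnorm : Algebra.norm K ζ ≠ 0 :=
    (Algebra.norm_ne_zero_iff).mpr (hζ.ne_zero (by have := Fintype.one_lt_card (α := L); omega))
  have hper : Function.Periodic (fun i => Algebra.trace K L (b * ζ ^ i) ≠ 0) N := fun i => by
    have hpow : b * ζ ^ (i + N) = Algebra.norm K ζ • (b * ζ ^ i) := by
      rw [Algebra.smul_def, FiniteField.algebraMap_norm_eq_pow, Nat.card_eq_fintype_card,
        Nat.card_eq_fintype_card, pow_add]
      ring
    simp [hpow, hnorm]
  have hperiod : Nat.count (fun i => Algebra.trace K L (b * ζ ^ i) ≠ 0) N * Fintype.card K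
      = Fintype.card L := by
    have hcycle := hζ.count_pow_eq_card (fun y => Algebra.trace K L (b * y) ≠ 0) (by simp)
    rw [← hN, Nat.count_mul_of_periodic hper] at hcycle
    have hfiber := card_filter_trace_mul_add_ne_zero_mul_card K hb 0
    simp only [add_zero, ← hcycle, mul_assoc] at hfiber
    exact Nat.eq_of_mul_eq_mul_left (by omega) (hfiber.trans (mul_comm _ _))
  obtain ⟨T, rfl⟩ := hn
  rw [mul_comm N T, Nat.count_mul_of_periodic hper, ← hN]
  calc T * Nat.count _ N * Fintype.card K * ((Fintype.card K - 1) * N)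
      = T * (Nat.count _ N * Fintype.card K) * ((Fintype.card K - 1) * N) := by ring
    _ = T * N * (Fintype.card K - 1) * Fintype.card L := by rw [hperiod]; ring

lemma hammingNorm_prod_eq_sum {α β M : Type*} [Fintype α] [Fintype β] [Zero M] [DecidableEq M]
    (f : α × β → M) : hammingNorm f = ∑ p : β, #{x | f (x, p) ≠ 0} := by
  simp only [hammingNorm, card_filter]
  rw [Fintype.sum_prod_type, sum_comm]

lemma one_le_of_card_eq_pow {F : Type*} [Field F] [Fintype F] {q k : ℕ}
    (h : Fintype.card F = q ^ k) : 1 ≤ k :=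
  Nat.one_le_iff_ne_zero.mpr fun hk => by
    have := Fintype.one_lt_card (α := F)
    simp_all

section Code

variable (Kq E1 E : Type*) [Field Kq] [Field E1] [Field E] [Algebra Kq E1] [Algebra Kq E]
  [Algebra E1 E] (ω : E) (h n : ℕ)

lemma cword_apply (a : E1) (b : E) (x : E1) (i : Fin n) (s : Bool) :
    cword Kq E1 E ω h n a b (x, i, s) = Algebra.trace Kq E1 (a * x) +
      Algebra.trace Kq E ((bif s then b else algebraMap E1 E a + b) * ω ^ (h * (i : ℕ))) := by
  cases s <;> rfl

noncomputable def cwordLinearMap [IsScalarTower Kq E1 E] :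
    E1 × E →ₗ[Kq] (E1 × Fin n × Bool → Kq) where
  toFun p := cword Kq E1 E ω h n p.1 p.2
  map_add' p p' := funext fun ⟨x, i, s⟩ => by
    cases s <;> simp [cword_apply, add_mul, add_add_add_comm]
  map_smul' t p := funext fun ⟨x, i, s⟩ => by
    cases s <;> simp only [cword_apply, Prod.smul_fst, Prod.smul_snd, Pi.smul_apply, cond_false,
      cond_true, algebraMap.coe_smul, ← smul_add, smul_mul_assoc, map_smul, smul_eq_mul,
      RingHom.id_apply, mul_add]

@[simp]
lemma cwordLinearMap_apply [IsScalarTower Kq E1 E] (p : E1 × E) :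
    cwordLinearMap Kq E1 E ω h n p = cword Kq E1 E ω h n p.1 p.2 :=
  rfl

variable [DecidableEq Kq] [Fintype E1]

lemma hammingNorm_cword_mul_card [Fintype Kq] {a : E1} (ha : a ≠ 0) (b : E) :
    hammingNorm (cword Kq E1 E ω h n a b) * Fintype.card Kq
      = 2 * n * (Fintype.card E1 * (Fintype.card Kq - 1)) := by
  have hslice : ∀ p : Fin n × Bool, #{x | cword Kq E1 E ω h n a b (x, p) ≠ 0} * Fintype.card Kq
      = Fintype.card E1 * (Fintype.card Kq - 1) := fun ⟨i, s⟩ => by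
    simpa only [cword_apply] using card_filter_trace_mul_add_ne_zero_mul_card Kq ha _
  rw [hammingNorm_prod_eq_sum, sum_mul, sum_congr rfl fun p _ => hslice p]
  simp [mul_comm]

lemma hammingNorm_cword_zero_left (b : E) :
    hammingNorm (cword Kq E1 E ω h n 0 b)
      = 2 * Fintype.card E1 * Nat.count (fun i => Algebra.trace Kq E (b * ω ^ (h * i)) ≠ 0) n := by
  rw [hammingNorm_prod_eq_sum, Nat.count_eq_card_filter_range, card_filter, mul_sum,
    ← Fin.sum_univ_eq_sum_range, Fintype.sum_prod_type]
  refine sum_congr rfl fun i _ => ?_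
  simp only [cword_apply, zero_mul, map_zero, zero_add, cond_false, cond_true, Fintype.sum_bool]
  by_cases hi : Algebra.trace Kq E (b * ω ^ (h * (i : ℕ))) = 0 <;> simp [hi, two_mul]

end Code

section WeightArithmetic

variable {q m m1 n : ℕ}

lemma weight_two_eq_mul (hq : 1 ≤ q) (hm1 : 1 ≤ m1) :
    2 * n * (q : ℚ) ^ (m1 + m - 1) * ((q : ℚ) - 1) / ((q : ℚ) ^ m - 1)
      = ((2 * n * q ^ (m1 - 1) * (q - 1) : ℕ) : ℚ) * ((q : ℚ) ^ m / ((q : ℚ) ^ m - 1)) := by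
  rw [show m1 + m - 1 = (m1 - 1) + m by omega, pow_add]
  push_cast [Nat.cast_sub hq]
  ring

lemma weight_one_le_weight_two (hq : 1 < q) (hm : 1 ≤ m) (hm1 : 1 ≤ m1) :
    ((2 * n * q ^ (m1 - 1) * (q - 1) : ℕ) : ℚ)
      ≤ 2 * n * (q : ℚ) ^ (m1 + m - 1) * ((q : ℚ) - 1) / ((q : ℚ) ^ m - 1) := by
  have hqm : (1 : ℚ) < (q : ℚ) ^ m := one_lt_pow₀ (by exact_mod_cast hq) (by omega)
  rw [weight_two_eq_mul hq.le hm1]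
  exact le_mul_of_one_le_right (Nat.cast_nonneg _) ((one_le_div (by linarith)).mpr (by linarith))

lemma weight_ratio_lt (hq : 1 < q) (hm : 1 < m) (hm1 : 1 ≤ m1) (hn : 0 < n) :
    ((q : ℚ) - 1) / (q : ℚ) <
      ((2 * n * q ^ (m1 - 1) * (q - 1) : ℕ) : ℚ) /
        (2 * n * (q : ℚ) ^ (m1 + m - 1) * ((q : ℚ) - 1) / ((q : ℚ) ^ m - 1)) := by
  have hq' : (1 : ℚ) < q := by exact_mod_cast hq
  have hqm : (q : ℚ) < (q : ℚ) ^ m := by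
    simpa using pow_lt_pow_right₀ hq' hm
  have hw : ((2 * n * q ^ (m1 - 1) * (q - 1) : ℕ) : ℚ) ≠ 0 := by
    have : 0 < q - 1 := by omega
    positivity
  rw [weight_two_eq_mul hq.le hm1, div_mul_cancel_left₀ hw, inv_div,
    div_lt_div_iff₀ (by linarith) (by linarith)]
  nlinarith

end WeightArithmetic

section TwoWeights

variable {q m m1 n : ℕ} {Kq E1 E : Type*} [Field Kq] [Fintype Kq] [DecidableEq Kq]
  [Field E1] [Fintype E1] [Field E] [Algebra Kq E1] [Algebra Kq E] [Algebra E1 E]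

lemma hammingNorm_cword_of_ne_zero (hq : q = Fintype.card Kq) (hc1 : Fintype.card E1 = q ^ m1)
    (ω : E) (h : ℕ) {a : E1} (ha : a ≠ 0) (b : E) :
    hammingNorm (cword Kq E1 E ω h n a b) = 2 * n * q ^ (m1 - 1) * (q - 1) := by
  have hq1 : 1 < q := hq ▸ Fintype.one_lt_card
  have hweight := hammingNorm_cword_mul_card Kq E1 E ω h n ha b
  rw [hc1, ← hq, ← Nat.sub_add_cancel (one_le_of_card_eq_pow hc1), pow_succ] at hweight
  exact Nat.eq_of_mul_eq_mul_right (by omega) (hweight.trans (by ring))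

variable [Fintype E]

lemma hammingNorm_cword_zero_left_eq (hq : q = Fintype.card Kq) (hm : 1 < m)
    (hc1 : Fintype.card E1 = q ^ m1) (hc : Fintype.card E = q ^ m)
    {ω : E} (hω : ∀ x : E, x ≠ 0 → ∃ k : ℕ, x = ω ^ k)
    (hn : (q ^ m - 1) / (q - 1) ∣ n) {b : E} (hb : b ≠ 0) :
    (hammingNorm (cword Kq E1 E ω 1 n 0 b) : ℚ)
      = 2 * n * (q : ℚ) ^ (m1 + m - 1) * ((q : ℚ) - 1) / ((q : ℚ) ^ m - 1) := by
  have hq1 : 1 < q := hq ▸ Fintype.one_lt_card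
  have hE : 2 < Fintype.card E := by
    rw [hc]
    calc 2 < q ^ 2 := by nlinarith
      _ ≤ q ^ m := Nat.pow_le_pow_right (by omega) hm
  have hcount := count_trace_mul_pow_ne_zero (n := n) Kq
    (isPrimitiveRoot_of_forall_eq_pow_s16 hω hE) hb (by rwa [hc, ← hq])
  rw [← hq, hc] at hcount
  have hcountQ := congrArg (Nat.cast : ℕ → ℚ) hcount
  push_cast [Nat.cast_sub hq1.le, Nat.cast_sub (Nat.one_le_pow _ _ (by omega : 0 < q))]
    at hcountQ
  have hpow : (q : ℚ) ^ m1 * (q : ℚ) ^ m = (q : ℚ) ^ (m1 + m - 1) * q := by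
    rw [← pow_add, ← pow_succ, Nat.sub_add_cancel (by omega)]
  have hqm : (q : ℚ) ^ m - 1 ≠ 0 := by
    have : (1 : ℚ) < (q : ℚ) ^ m := one_lt_pow₀ (by exact_mod_cast hq1) (by omega)
    linarith
  rw [hammingNorm_cword_zero_left, hc1, eq_div_iff hqm]
  simp only [one_mul]
  push_cast
  apply mul_right_cancel₀ (show (q : ℚ) ≠ 0 by positivity)
  linear_combination (2 * (q : ℚ) ^ m1) * hcountQ + 2 * n * (q - 1) * hpow

lemma hammingNorm_cword_mem_Icc (hq : q = Fintype.card Kq) (hm : 1 < m)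
    (hc1 : Fintype.card E1 = q ^ m1) (hc : Fintype.card E = q ^ m)
    {ω : E} (hω : ∀ x : E, x ≠ 0 → ∃ k : ℕ, x = ω ^ k)
    (hn : (q ^ m - 1) / (q - 1) ∣ n) {a : E1} {b : E} (hab : (a, b) ≠ (0, 0)) :
    (hammingNorm (cword Kq E1 E ω 1 n a b) : ℚ) ∈ Set.Icc
      ((2 * n * q ^ (m1 - 1) * (q - 1) : ℕ) : ℚ)
      (2 * n * (q : ℚ) ^ (m1 + m - 1) * ((q : ℚ) - 1) / ((q : ℚ) ^ m - 1)) := by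
  have hle := weight_one_le_weight_two (n := n) (hq ▸ Fintype.one_lt_card) hm.le
    (one_le_of_card_eq_pow hc1)
  rcases eq_or_ne a 0 with rfl | ha
  · rw [hammingNorm_cword_zero_left_eq hq hm hc1 hc hω hn fun hb => hab (by rw [hb])]
    exact ⟨hle, le_rfl⟩
  · rw [hammingNorm_cword_of_ne_zero hq hc1 ω 1 ha b]
    exact ⟨le_rfl, hle⟩

end TwoWeights

theorem stmt16_general (q m m1 n : ℕ) (Kq E1 E : Type*)
    [Field Kq] [Fintype Kq]
    [Field E1] [Fintype E1] [Field E] [Fintype E]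
    [Algebra Kq E1] [Algebra Kq E] [Algebra E1 E] [IsScalarTower Kq E1 E]
    (hq : q = Fintype.card Kq)
    (hm : 1 < m)
    (hc1 : Fintype.card E1 = q ^ m1) (hc : Fintype.card E = q ^ m)
    (ω : E) (hω : ∀ x : E, x ≠ 0 → ∃ k : ℕ, x = ω ^ k)
    (hn0 : 0 < n) (hn : (q ^ m - 1) / (q - 1) ∣ n) :
    ((q : ℚ) - 1) / (q : ℚ) <
      ((2 * n * q ^ (m1 - 1) * (q - 1) : ℕ) : ℚ) /
        (2 * n * (q : ℚ) ^ (m1 + m - 1) * ((q : ℚ) - 1) / ((q : ℚ) ^ m - 1)) ∧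
    ∀ a : E1, ∀ b : E, (a, b) ≠ (0, 0) →
      ∀ a' : E1, ∀ b' : E,
        (∀ z : E1 × Fin n × Bool,
            cword Kq E1 E ω 1 n a' b' z ≠ 0 → cword Kq E1 E ω 1 n a b z ≠ 0) →
          ∃ s : Kq, cword Kq E1 E ω 1 n a' b' = s • cword Kq E1 E ω 1 n a b := by
  have hq1 : 1 < q := hq ▸ Fintype.one_lt_card
  have hratio := weight_ratio_lt hq1 hm (one_le_of_card_eq_pow hc1) hn0
  have hw := fun a b => hammingNorm_cword_mem_Icc (a := a) (b := b) hq hm hc1 hc hω hn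
  have hmin := isMinimalCode_of_weight_ratio (LinearMap.range (cwordLinearMap Kq E1 E ω 1 n)) _ _
    (by
      rintro _ ⟨⟨a, b⟩, rfl⟩ hc0
      exact hw a b fun h => hc0 (by rw [h, Prod.mk_zero_zero, map_zero]))
    (by rwa [← hq])
  refine ⟨hratio, fun a b hab a' b' hsupp => hmin _ ⟨(a, b), rfl⟩ ?_ _ ⟨(a', b'), rfl⟩ hsupp⟩
  have hpos : (0 : ℚ) < ((2 * n * q ^ (m1 - 1) * (q - 1) : ℕ) : ℚ) := by
    have : 0 < q - 1 := by omega
    positivity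
  exact hammingNorm_pos_iff.mp (by exact_mod_cast hpos.trans_le (hw a b hab).1)

/-- If `m > 1` and `h = 1`, the two-weight code `C_K` is minimal: its nonzero weights
`w_1 = 2nq^{m_1−1}(q−1)` and `w_2 = 2nq^{m_1+m−1}(q−1)/(q^m−1)` satisfy
`w_min/w_max > (q−1)/q`, and every nonzero codeword covers only its scalar
multiples. -/
theorem stmt16 (q m m1 n : ℕ) (Kq E1 E : Type*)
    [Field Kq] [Fintype Kq] [DecidableEq Kq]
    [Field E1] [Fintype E1] [Field E] [Fintype E]
    [Algebra Kq E1] [Algebra Kq E] [Algebra E1 E] [IsScalarTower Kq E1 E]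
    (hq : q = Fintype.card Kq) (hqodd : Odd q)
    (hm1 : m1 ∣ m) (hm : 1 < m)
    (hc1 : Fintype.card E1 = q ^ m1) (hc : Fintype.card E = q ^ m)
    (ω : E) (hω : ∀ x : E, x ≠ 0 → ∃ k : ℕ, x = ω ^ k)
    (hn0 : 0 < n) (hn : (q ^ m - 1) / (q - 1) ∣ n) :
    ((q : ℚ) - 1) / (q : ℚ) <
      ((2 * n * q ^ (m1 - 1) * (q - 1) : ℕ) : ℚ) /
        (2 * n * (q : ℚ) ^ (m1 + m - 1) * ((q : ℚ) - 1) / ((q : ℚ) ^ m - 1)) ∧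
    ∀ a : E1, ∀ b : E, (a, b) ≠ (0, 0) →
      ∀ a' : E1, ∀ b' : E,
        (∀ z : E1 × Fin n × Bool,
            cword Kq E1 E ω 1 n a' b' z ≠ 0 → cword Kq E1 E ω 1 n a b z ≠ 0) →
          ∃ s : Kq, cword Kq E1 E ω 1 n a' b' = s • cword Kq E1 E ω 1 n a b :=
  stmt16_general q m m1 n Kq E1 E hq hm hc1 hc ω hω hn0 hn
end
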